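/- Let ρ_- > 0, ρ_+ > 0 and u_- > u_+, and set σ = (√ρ_- · u_- + √ρ_+ · u_+)/(√ρ_- + √ρ_+) and w(t) = √(ρ_-ρ_+)(u_- − u_+) t. Then u_+ < σ < u_-, and the delta shock (ρ_0 + w(t)δ_{x=σt}, u_0) satisfies the continuity equation weakly: for every smooth compactly supported test function φ : (0,∞) × ℝ → ℝ, ∫_0^∞ ∫_ℝ ρ_0(t,x) ∂_tφ(t,x) dx dt + ∫_0^∞ w(t) ∂_tφ(t,σt) dt + ∫_0^∞ ∫_ℝ ρ_0(t,x)u_0(t,x) ∂_xφ(t,x) dx dt + ∫_0^∞ σ w(t) ∂_xφ(t,σt) dt = 0. -/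

import Mathlib

open Filter Topology MeasureTheory

/-- The delta shock speed `σ = (√ρ_- u_- + √ρ_+ u_+)/(√ρ_- + √ρ_+)`. -/
noncomputable def deltaSpeed (ρm ρp um up : ℝ) : ℝ :=
  (Real.sqrt ρm * um + Real.sqrt ρp * up) / (Real.sqrt ρm + Real.sqrt ρp)

/-- The delta shock weight `w(t) = √(ρ_-ρ_+)(u_- − u_+) t`. -/
noncomputable def deltaWeight (ρm ρp um up t : ℝ) : ℝ :=
  Real.sqrt (ρm * ρp) * (um - up) * t

/-- The step density `ρ_0(t,x) = ρ_-` for `x < σt`, `= ρ_+` for `x > σt`. -/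
noncomputable def rhoZero (ρm ρp um up t x : ℝ) : ℝ :=
  if x < deltaSpeed ρm ρp um up * t then ρm else ρp

/-- The step velocity `u_0(t,x) = u_-` for `x < σt`, `= u_+` for `x > σt`. -/
noncomputable def uZero (ρm ρp um up t x : ℝ) : ℝ :=
  if x < deltaSpeed ρm ρp um up * t then um else up

namespace DeltaShockAux
open Filter Topology MeasureTheory Set

variable {φ : ℝ × ℝ → ℝ}

theorem fderiv_zero_of_nmem (hφ : ContDiff ℝ (⊤ : ℕ∞) φ) {p : ℝ × ℝ} (hp : p ∉ tsupport φ) :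
    fderiv ℝ φ p = 0 := by
  have h : φ =ᶠ[𝓝 p] (fun _ => (0:ℝ)) := by
    filter_upwards [(isClosed_tsupport φ).isOpen_compl.mem_nhds hp] with q hq
    exact image_eq_zero_of_notMem_tsupport hq
  rw [h.fderiv_eq, fderiv_const_apply]

theorem hasDerivAt_line (hφ : ContDiff ℝ (⊤ : ℕ∞) φ) (σ y t : ℝ) :
    HasDerivAt (fun t => φ (t, y + σ * t)) (fderiv ℝ φ (t, y + σ * t) (1, σ)) t := by
  have h1 : HasDerivAt (fun t : ℝ => (t, y + σ * t)) ((1:ℝ), σ) t := by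
    have := (hasDerivAt_id t).prodMk (((hasDerivAt_id t).const_mul σ).const_add y)
    simpa using this
  exact ((hφ.differentiable (by simp) (t, y + σ * t)).hasFDerivAt.comp_hasDerivAt t h1)

theorem hasDerivAt_vert (hφ : ContDiff ℝ (⊤ : ℕ∞) φ) (σ t y : ℝ) :
    HasDerivAt (fun y => φ (t, y + σ * t)) (fderiv ℝ φ (t, y + σ * t) (0, 1)) y := by
  have h1 : HasDerivAt (fun y : ℝ => (t, y + σ * t)) ((0:ℝ), 1) y := by
    have := (hasDerivAt_const y t).prodMk ((hasDerivAt_id y).add_const (σ * t))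
    simpa using this
  exact ((hφ.differentiable (by simp) (t, y + σ * t)).hasFDerivAt.comp_hasDerivAt y h1)

theorem hasDerivAt_psi (hφ : ContDiff ℝ (⊤ : ℕ∞) φ) (σ t : ℝ) :
    HasDerivAt (fun t => φ (t, σ * t)) (fderiv ℝ φ (t, σ * t) (1, σ)) t := by
  have h1 : HasDerivAt (fun t : ℝ => (t, σ * t)) ((1:ℝ), σ) t := by
    have := (hasDerivAt_id t).prodMk ((hasDerivAt_id t).const_mul σ)
    simpa using this
  exact ((hφ.differentiable (by simp) (t, σ * t)).hasFDerivAt.comp_hasDerivAt t h1)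

theorem cont_G (hφ : ContDiff ℝ (⊤ : ℕ∞) φ) (σ : ℝ) (v : ℝ × ℝ) :
    Continuous (fun p : ℝ × ℝ => fderiv ℝ φ (p.1, p.2 + σ * p.1) v) := by
  have hD : Continuous (fderiv ℝ φ) := hφ.continuous_fderiv (by simp)
  have hL : Continuous (fun p : ℝ × ℝ => (p.1, p.2 + σ * p.1)) := by fun_prop
  exact (hD.comp hL).clm_apply continuous_const

theorem hcs_G (hφ : ContDiff ℝ (⊤ : ℕ∞) φ) (hc : HasCompactSupport φ) (σ : ℝ) (v : ℝ × ℝ) :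
    HasCompactSupport (fun p : ℝ × ℝ => fderiv ℝ φ (p.1, p.2 + σ * p.1) v) := by
  apply HasCompactSupport.intro (K := (fun q : ℝ × ℝ => (q.1, q.2 - σ * q.1)) '' tsupport φ)
    (hc.image (by fun_prop))
  intro p hp
  by_contra h
  have hmem : ((p.1, p.2 + σ * p.1) : ℝ × ℝ) ∈ tsupport φ := by
    by_contra h2
    rw [fderiv_zero_of_nmem hφ h2] at h
    simp at h
  exact hp ⟨(p.1, p.2 + σ * p.1), hmem, by simp⟩

theorem fderiv_split (φ : ℝ × ℝ → ℝ) (p : ℝ × ℝ) (σ : ℝ) :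
    fderiv ℝ φ p (1, σ) = fderiv ℝ φ p (1, 0) + σ * fderiv ℝ φ p (0, 1) := by
  have h : ((1:ℝ), σ) = ((1:ℝ), (0:ℝ)) + σ • ((0:ℝ), (1:ℝ)) := by simp
  rw [h, map_add, ContinuousLinearMap.map_smul, smul_eq_mul]

theorem slice_cont (hφ : ContDiff ℝ (⊤ : ℕ∞) φ) (σ t : ℝ) (v : ℝ × ℝ) :
    Continuous (fun y : ℝ => fderiv ℝ φ (t, y + σ * t) v) :=
  (cont_G hφ σ v).comp (Continuous.prodMk_right t)

theorem slice_hcs (hφ : ContDiff ℝ (⊤ : ℕ∞) φ) (hc : HasCompactSupport φ) (σ t : ℝ) (v : ℝ × ℝ) :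
    HasCompactSupport (fun y : ℝ => fderiv ℝ φ (t, y + σ * t) v) := by
  apply HasCompactSupport.intro (K := (fun q : ℝ × ℝ => q.2 - σ * q.1) '' tsupport φ)
    (hc.image (by fun_prop))
  intro y hy
  by_contra h
  have hmem : ((t, y + σ * t) : ℝ × ℝ) ∈ tsupport φ := by
    by_contra h2
    rw [fderiv_zero_of_nmem hφ h2] at h
    simp at h
  exact hy ⟨(t, y + σ * t), hmem, by simp⟩

theorem g_contdiff (hφ : ContDiff ℝ (⊤ : ℕ∞) φ) (σ y : ℝ) :
    ContDiff ℝ 1 (fun t => φ (t, y + σ * t)) :=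
  (hφ.of_le (by simp)).comp (by fun_prop)

theorem g_hcs (hc : HasCompactSupport φ) (σ y : ℝ) :
    HasCompactSupport (fun t => φ (t, y + σ * t)) := by
  apply HasCompactSupport.intro (K := Prod.fst '' tsupport φ) (hc.image continuous_fst)
  intro t ht
  by_contra h
  exact ht ⟨(t, y + σ * t), subset_tsupport _ h, rfl⟩

theorem h_contdiff (hφ : ContDiff ℝ (⊤ : ℕ∞) φ) (σ t : ℝ) :
    ContDiff ℝ 1 (fun y => φ (t, y + σ * t)) :=
  (hφ.of_le (by simp)).comp (by fun_prop)

theorem h_hcs (hc : HasCompactSupport φ) (σ t : ℝ) :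
    HasCompactSupport (fun y => φ (t, y + σ * t)) := by
  apply HasCompactSupport.intro (K := (fun q : ℝ × ℝ => q.2 - σ * q.1) '' tsupport φ)
    (hc.image (by fun_prop))
  intro y hy
  by_contra h
  exact hy ⟨(t, y + σ * t), subset_tsupport _ h, by simp⟩

theorem psi_contdiff (hφ : ContDiff ℝ (⊤ : ℕ∞) φ) (σ : ℝ) :
    ContDiff ℝ 1 (fun t => φ (t, σ * t)) :=
  (hφ.of_le (by simp)).comp (by fun_prop)

theorem psi_hcs (hc : HasCompactSupport φ) (σ : ℝ) :
    HasCompactSupport (fun t => φ (t, σ * t)) := by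
  apply HasCompactSupport.intro (K := Prod.fst '' tsupport φ) (hc.image continuous_fst)
  intro t ht
  by_contra h
  exact ht ⟨(t, σ * t), subset_tsupport _ h, rfl⟩

theorem psislice_cont (hφ : ContDiff ℝ (⊤ : ℕ∞) φ) (σ : ℝ) (v : ℝ × ℝ) :
    Continuous (fun t : ℝ => fderiv ℝ φ (t, σ * t) v) := by
  have hD : Continuous (fderiv ℝ φ) := hφ.continuous_fderiv (by simp)
  have hL : Continuous (fun t : ℝ => ((t, σ * t) : ℝ × ℝ)) := by fun_prop
  exact (hD.comp hL).clm_apply continuous_const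

theorem psislice_hcs (hφ : ContDiff ℝ (⊤ : ℕ∞) φ) (hc : HasCompactSupport φ) (σ : ℝ) (v : ℝ × ℝ) :
    HasCompactSupport (fun t : ℝ => fderiv ℝ φ (t, σ * t) v) := by
  apply HasCompactSupport.intro (K := Prod.fst '' tsupport φ) (hc.image continuous_fst)
  intro t ht
  by_contra h
  have hmem : ((t, σ * t) : ℝ × ℝ) ∈ tsupport φ := by
    by_contra h2
    rw [fderiv_zero_of_nmem hφ h2] at h
    simp at h
  exact ht ⟨(t, σ * t), hmem, rfl⟩

theorem integral_deriv_zero {f : ℝ → ℝ} (hf : ContDiff ℝ 1 f) (hc : HasCompactSupport f) :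
    ∫ t, deriv f t = 0 := by
  have h1 := HasCompactSupport.integral_Iic_deriv_eq hf hc 0
  have h2 := HasCompactSupport.integral_Ioi_deriv_eq hf hc 0
  have hint : Integrable (deriv f) :=
    (hf.continuous_deriv le_rfl).integrable_of_hasCompactSupport hc.deriv
  have h3 := intervalIntegral.integral_Iic_add_Ioi (b := (0:ℝ)) hint.integrableOn hint.integrableOn
  rw [← h3, h1, h2]; ring

theorem integral_t_deriv (hφ : ContDiff ℝ (⊤ : ℕ∞) φ) (hc : HasCompactSupport φ) (σ y : ℝ) :
    ∫ t : ℝ, fderiv ℝ φ (t, y + σ * t) (1, σ) = 0 := by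
  have heq : (fun t : ℝ => fderiv ℝ φ (t, y + σ * t) (1, σ))
      = deriv (fun t => φ (t, y + σ * t)) :=
    funext fun t => ((hasDerivAt_line hφ σ y t).deriv).symm
  rw [heq, integral_deriv_zero (g_contdiff hφ σ y) (g_hcs hc σ y)]

theorem step_integrable {G : ℝ → ℝ} (hG : Continuous G) (hGc : HasCompactSupport G) (a b : ℝ) :
    Integrable (fun y => (if y < 0 then a else b) * G y) := by
  apply (hG.integrable_of_hasCompactSupport hGc).bdd_mul (c := max ‖a‖ ‖b‖)
  · exact (Measurable.ite measurableSet_Iio measurable_const measurable_const).aestronglyMeasurable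
  · refine Filter.Eventually.of_forall (fun y => ?_)
    split_ifs
    exacts [le_max_left _ _, le_max_right _ _]

theorem step_integrable_2d (hφ : ContDiff ℝ (⊤ : ℕ∞) φ) (hc : HasCompactSupport φ) (σ : ℝ) (v : ℝ × ℝ)
    (a b : ℝ) :
    Integrable (fun p : ℝ × ℝ => (if p.2 < 0 then a else b) * fderiv ℝ φ (p.1, p.2 + σ * p.1) v) := by
  apply ((cont_G hφ σ v).integrable_of_hasCompactSupport (hcs_G hφ hc σ v)).bdd_mul (c := max ‖a‖ ‖b‖)
  · refine (Measurable.ite ?_ measurable_const measurable_const).aestronglyMeasurable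
    exact measurableSet_lt measurable_snd measurable_const
  · refine Filter.Eventually.of_forall (fun y => ?_)
    split_ifs
    exacts [le_max_left _ _, le_max_right _ _]

theorem inner_J (hφ : ContDiff ℝ (⊤ : ℕ∞) φ) (hc : HasCompactSupport φ) (σ t a b : ℝ) :
    ∫ y : ℝ, (if y < 0 then a else b) * fderiv ℝ φ (t, y + σ * t) (0, 1)
      = (a - b) * φ (t, σ * t) := by
  have hd : ∀ y : ℝ, deriv (fun y => φ (t, y + σ * t)) y = fderiv ℝ φ (t, y + σ * t) (0, 1) :=
    fun y => (hasDerivAt_vert hφ σ t y).deriv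
  have hint : Integrable (fun y : ℝ => (if y < 0 then a else b) * fderiv ℝ φ (t, y + σ * t) (0, 1)) :=
    step_integrable (slice_cont hφ σ t (0,1)) (slice_hcs hφ hc σ t (0,1)) a b
  have hdint : Integrable (deriv (fun y => φ (t, y + σ * t))) :=
    ((h_contdiff hφ σ t).continuous_deriv le_rfl).integrable_of_hasCompactSupport
      (h_hcs hc σ t).deriv
  rw [← intervalIntegral.integral_Iic_add_Ioi (b := (0:ℝ)) hint.integrableOn hint.integrableOn]
  have hIic : ∫ y in Iic (0:ℝ), (if y < 0 then a else b) * fderiv ℝ φ (t, y + σ * t) (0, 1)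
      = a * φ (t, 0 + σ * t) := by
    have hae : ∀ᵐ y : ℝ, y ∈ Iic (0:ℝ) →
        (if y < 0 then a else b) * fderiv ℝ φ (t, y + σ * t) (0, 1)
          = a * deriv (fun y => φ (t, y + σ * t)) y := by
      filter_upwards [compl_mem_ae_iff.mpr (measure_singleton (0:ℝ))] with y hy hy'
      have : y < 0 := lt_of_le_of_ne hy' (by simpa using hy)
      rw [if_pos this, hd]
    rw [setIntegral_congr_ae measurableSet_Iic hae, integral_const_mul a _,
      HasCompactSupport.integral_Iic_deriv_eq (h_contdiff hφ σ t) (h_hcs hc σ t) 0]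
  have hIoi : ∫ y in Ioi (0:ℝ), (if y < 0 then a else b) * fderiv ℝ φ (t, y + σ * t) (0, 1)
      = -(b * φ (t, 0 + σ * t)) := by
    have heq : ∀ y ∈ Ioi (0:ℝ),
        (if y < 0 then a else b) * fderiv ℝ φ (t, y + σ * t) (0, 1)
          = b * deriv (fun y => φ (t, y + σ * t)) y := by
      intro y hy
      rw [if_neg (not_lt.mpr (le_of_lt hy)), hd]
    rw [setIntegral_congr_fun measurableSet_Ioi heq, integral_const_mul b _,
      HasCompactSupport.integral_Ioi_deriv_eq (h_contdiff hφ σ t) (h_hcs hc σ t) 0]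
    ring
  rw [hIic, hIoi]
  norm_num
  ring

end DeltaShockAux

open DeltaShockAux Set in
/-- For `ρ_± > 0`, `u_- > u_+`: the delta shock speed satisfies the entropy condition
`u_+ < σ < u_-`, and the delta shock `(ρ_0 + w(t)δ_{x=σt}, u_0)` satisfies the continuity
equation weakly: for every smooth test function `φ` with compact support in `(0,∞) × ℝ`,
`∫∫ ρ_0 ∂_tφ + ∫ w(t) ∂_tφ(t,σt) + ∫∫ ρ_0u_0 ∂_xφ + ∫ σ w(t) ∂_xφ(t,σt) = 0`. -/
theorem stmt7 (ρm ρp um up : ℝ) (hρm : 0 < ρm) (hρp : 0 < ρp) (hu : up < um) :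
    up < deltaSpeed ρm ρp um up ∧ deltaSpeed ρm ρp um up < um ∧
    ∀ φ : ℝ × ℝ → ℝ, ContDiff ℝ (⊤ : ℕ∞) φ → HasCompactSupport φ →
      tsupport φ ⊆ Set.Ioi 0 ×ˢ (Set.univ : Set ℝ) →
      (∫ t in Set.Ioi (0 : ℝ), ∫ x : ℝ,
          rhoZero ρm ρp um up t x * fderiv ℝ φ (t, x) (1, 0))
        + (∫ t in Set.Ioi (0 : ℝ),
            deltaWeight ρm ρp um up t * fderiv ℝ φ (t, deltaSpeed ρm ρp um up * t) (1, 0))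
        + (∫ t in Set.Ioi (0 : ℝ), ∫ x : ℝ,
            rhoZero ρm ρp um up t x * uZero ρm ρp um up t x * fderiv ℝ φ (t, x) (0, 1))
        + (∫ t in Set.Ioi (0 : ℝ),
            deltaSpeed ρm ρp um up * deltaWeight ρm ρp um up t *
              fderiv ℝ φ (t, deltaSpeed ρm ρp um up * t) (0, 1)) = 0 := by
  have hsm := Real.sqrt_pos.mpr hρm
  have hsp := Real.sqrt_pos.mpr hρp
  have hs : 0 < Real.sqrt ρm + Real.sqrt ρp := by linarith
  have hs0 : Real.sqrt ρm + Real.sqrt ρp ≠ 0 := ne_of_gt hs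
  refine ⟨?_, ?_, ?_⟩
  · rw [deltaSpeed, lt_div_iff₀ hs]; nlinarith
  · rw [deltaSpeed, div_lt_iff₀ hs]; nlinarith
  intro φ hφ hφc hφs
  set σ := deltaSpeed ρm ρp um up with hσdef
  set c := Real.sqrt (ρm * ρp) * (um - up) with hcdef
  -- algebra
  have hσs : σ * (Real.sqrt ρm + Real.sqrt ρp) = Real.sqrt ρm * um + Real.sqrt ρp * up := by
    rw [hσdef, deltaSpeed]; field_simp
  have h1 : Real.sqrt ρm ^ 2 = ρm := Real.sq_sqrt hρm.le
  have h2 : Real.sqrt ρp ^ 2 = ρp := Real.sq_sqrt hρp.le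
  have hmp : Real.sqrt (ρm * ρp) = Real.sqrt ρm * Real.sqrt ρp := Real.sqrt_mul hρm.le ρp
  have halg : ρm * (um - σ) - ρp * (up - σ) = c := by
    rw [hcdef, hmp]
    linear_combination (-(um - σ)) * h1 + (up - σ) * h2 - (Real.sqrt ρm - Real.sqrt ρp) * hσs
  -- fderiv vanishing for t ≤ 0
  have hzero : ∀ t ≤ (0:ℝ), ∀ x : ℝ, fderiv ℝ φ (t, x) = 0 := by
    intro t ht x
    apply fderiv_zero_of_nmem hφ
    intro hmem
    have h := (hφs hmem).1
    simp only [Set.mem_Ioi] at h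
    linarith
  have hprod : (volume : Measure (ℝ × ℝ)) = (volume : Measure ℝ).prod volume :=
    Measure.volume_eq_prod ℝ ℝ
  -- Step 1: rewrite the four integrals
  have hA1 : (∫ t in Set.Ioi (0:ℝ), ∫ x : ℝ, rhoZero ρm ρp um up t x * fderiv ℝ φ (t, x) (1, 0))
      = ∫ t : ℝ, ∫ y : ℝ, (if y < 0 then ρm else ρp) * fderiv ℝ φ (t, y + σ * t) (1, 0) := by
    rw [setIntegral_eq_integral_of_forall_compl_eq_zero (fun t ht => by
      have ht' : t ≤ 0 := le_of_not_gt (by simpa using ht)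
      have hz : ∀ x : ℝ, rhoZero ρm ρp um up t x * fderiv ℝ φ (t, x) (1, 0) = 0 := fun x => by
        rw [hzero t ht' x]; simp
      simp only [hz, integral_zero])]
    congr 1
    funext t
    have hcov : (∫ x : ℝ, rhoZero ρm ρp um up t x * fderiv ℝ φ (t, x) (1, 0))
        = ∫ y : ℝ, rhoZero ρm ρp um up t (y + σ * t) * fderiv ℝ φ (t, y + σ * t) (1, 0) :=
      (integral_add_right_eq_self
        (fun x => rhoZero ρm ρp um up t x * fderiv ℝ φ (t, x) (1, 0)) (σ * t)).symm
    rw [hcov]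
    congr 1
    funext y
    simp only [rhoZero, ← hσdef, add_lt_iff_neg_right]
  have hA3 : (∫ t in Set.Ioi (0:ℝ), ∫ x : ℝ,
        rhoZero ρm ρp um up t x * uZero ρm ρp um up t x * fderiv ℝ φ (t, x) (0, 1))
      = ∫ t : ℝ, ∫ y : ℝ, (if y < 0 then ρm * um else ρp * up)
          * fderiv ℝ φ (t, y + σ * t) (0, 1) := by
    rw [setIntegral_eq_integral_of_forall_compl_eq_zero (fun t ht => by
      have ht' : t ≤ 0 := le_of_not_gt (by simpa using ht)
      have hz : ∀ x : ℝ, rhoZero ρm ρp um up t x * uZero ρm ρp um up t x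
          * fderiv ℝ φ (t, x) (0, 1) = 0 := fun x => by
        rw [hzero t ht' x]; simp
      simp only [hz, integral_zero])]
    congr 1
    funext t
    have hcov : (∫ x : ℝ, rhoZero ρm ρp um up t x * uZero ρm ρp um up t x
          * fderiv ℝ φ (t, x) (0, 1))
        = ∫ y : ℝ, rhoZero ρm ρp um up t (y + σ * t) * uZero ρm ρp um up t (y + σ * t)
            * fderiv ℝ φ (t, y + σ * t) (0, 1) :=
      (integral_add_right_eq_self
        (fun x => rhoZero ρm ρp um up t x * uZero ρm ρp um up t x
          * fderiv ℝ φ (t, x) (0, 1)) (σ * t)).symm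
    rw [hcov]
    congr 1
    funext y
    by_cases hy : y < 0 <;>
      simp only [rhoZero, uZero, ← hσdef, add_lt_iff_neg_right, hy, if_true, if_false,
        ite_true, ite_false] <;> try ring
  have hA2 : (∫ t in Set.Ioi (0:ℝ), deltaWeight ρm ρp um up t * fderiv ℝ φ (t, σ * t) (1, 0))
      = ∫ t : ℝ, c * t * fderiv ℝ φ (t, σ * t) (1, 0) := by
    rw [setIntegral_eq_integral_of_forall_compl_eq_zero (fun t ht => by
      have ht' : t ≤ 0 := le_of_not_gt (by simpa using ht)
      rw [hzero t ht' (σ * t)]; simp)]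
    congr 1
  have hA4 : (∫ t in Set.Ioi (0:ℝ),
        σ * deltaWeight ρm ρp um up t * fderiv ℝ φ (t, σ * t) (0, 1))
      = ∫ t : ℝ, σ * (c * t) * fderiv ℝ φ (t, σ * t) (0, 1) := by
    rw [setIntegral_eq_integral_of_forall_compl_eq_zero (fun t ht => by
      have ht' : t ≤ 0 := le_of_not_gt (by simpa using ht)
      rw [hzero t ht' (σ * t)]; simp)]
    congr 1
  -- integrability
  have hint2d : ∀ (v : ℝ × ℝ) (a b : ℝ), Integrable
      (fun p : ℝ × ℝ => (if p.2 < 0 then a else b) * fderiv ℝ φ (p.1, p.2 + σ * p.1) v)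
      ((volume : Measure ℝ).prod volume) := fun v a b => by
    rw [← hprod]; exact step_integrable_2d hφ hφc σ v a b
  have hslice : ∀ (v : ℝ × ℝ) (a b : ℝ) (t : ℝ), Integrable
      (fun y : ℝ => (if y < 0 then a else b) * fderiv ℝ φ (t, y + σ * t) v) :=
    fun v a b t => step_integrable (slice_cont hφ σ t v) (slice_hcs hφ hφc σ t v) a b
  have houter : ∀ (v : ℝ × ℝ) (a b : ℝ), Integrable
      (fun t : ℝ => ∫ y : ℝ, (if y < 0 then a else b) * fderiv ℝ φ (t, y + σ * t) v) :=
    fun v a b => (hint2d v a b).integral_prod_left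
  -- B1 + B3 = I + J
  have hsplit : (∫ t : ℝ, ∫ y : ℝ, (if y < 0 then ρm else ρp) * fderiv ℝ φ (t, y + σ * t) (1, 0))
      + (∫ t : ℝ, ∫ y : ℝ, (if y < 0 then ρm * um else ρp * up)
          * fderiv ℝ φ (t, y + σ * t) (0, 1))
      = (∫ t : ℝ, ∫ y : ℝ, (if y < 0 then ρm else ρp) * fderiv ℝ φ (t, y + σ * t) (1, σ))
      + (∫ t : ℝ, ∫ y : ℝ, (if y < 0 then ρm * (um - σ) else ρp * (up - σ))
          * fderiv ℝ φ (t, y + σ * t) (0, 1)) := by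
    rw [← integral_add (houter (1,0) ρm ρp) (houter (0,1) (ρm*um) (ρp*up)),
        ← integral_add (houter (1,σ) ρm ρp) (houter (0,1) (ρm*(um-σ)) (ρp*(up-σ)))]
    congr 1
    funext t
    rw [← integral_add (hslice (1,0) ρm ρp t) (hslice (0,1) (ρm*um) (ρp*up) t),
        ← integral_add (hslice (1,σ) ρm ρp t) (hslice (0,1) (ρm*(um-σ)) (ρp*(up-σ)) t)]
    congr 1
    funext y
    rw [fderiv_split φ (t, y + σ * t) σ]
    by_cases hy : y < 0 <;> simp only [hy, if_true, if_false, ite_true, ite_false] <;> try ring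
  -- I = 0
  have hI : (∫ t : ℝ, ∫ y : ℝ, (if y < 0 then ρm else ρp) * fderiv ℝ φ (t, y + σ * t) (1, σ))
      = 0 := by
    have hswap : (∫ t : ℝ, ∫ y : ℝ, (if y < 0 then ρm else ρp)
          * fderiv ℝ φ (t, y + σ * t) (1, σ))
        = ∫ y : ℝ, ∫ t : ℝ, (if y < 0 then ρm else ρp) * fderiv ℝ φ (t, y + σ * t) (1, σ) :=
      integral_integral_swap (hint2d (1,σ) ρm ρp)
    rw [hswap]
    have hz : ∀ y : ℝ, (∫ t : ℝ, (if y < 0 then ρm else ρp)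
        * fderiv ℝ φ (t, y + σ * t) (1, σ)) = 0 := fun y => by
      rw [integral_const_mul, integral_t_deriv hφ hφc σ y, mul_zero]
    simp only [hz, integral_zero]
  -- J = c ∫ ψ
  have hJ : (∫ t : ℝ, ∫ y : ℝ, (if y < 0 then ρm * (um - σ) else ρp * (up - σ))
        * fderiv ℝ φ (t, y + σ * t) (0, 1)) = c * ∫ t : ℝ, φ (t, σ * t) := by
    have hz : ∀ t : ℝ, (∫ y : ℝ, (if y < 0 then ρm * (um - σ) else ρp * (up - σ))
        * fderiv ℝ φ (t, y + σ * t) (0, 1)) = c * φ (t, σ * t) := fun t => by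
      rw [inner_J hφ hφc σ t _ _, show ρm * (um - σ) - ρp * (up - σ) = c from halg]
    simp only [hz]
    rw [integral_const_mul]
  -- A2 + A4
  have hψint : Integrable (fun t : ℝ => φ (t, σ * t)) :=
    ((psi_contdiff hφ σ).continuous).integrable_of_hasCompactSupport (psi_hcs hφc σ)
  have hslice24 : ∀ v : ℝ × ℝ, Integrable (fun t : ℝ => c * t * fderiv ℝ φ (t, σ * t) v) := by
    intro v
    apply Continuous.integrable_of_hasCompactSupport
    · exact (continuous_const.mul continuous_id).mul (psislice_cont hφ σ v)
    · apply HasCompactSupport.intro (psislice_hcs hφ hφc σ v)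
      intro t ht
      rw [image_eq_zero_of_notMem_tsupport ht, mul_zero]
  have hslice24' : Integrable (fun t : ℝ => σ * (c * t) * fderiv ℝ φ (t, σ * t) (0, 1)) := by
    apply Continuous.integrable_of_hasCompactSupport
    · exact (continuous_const.mul (continuous_const.mul continuous_id)).mul
        (psislice_cont hφ σ (0,1))
    · apply HasCompactSupport.intro (psislice_hcs hφ hφc σ (0,1))
      intro t ht
      rw [image_eq_zero_of_notMem_tsupport ht, mul_zero]
  have h24 : (∫ t : ℝ, c * t * fderiv ℝ φ (t, σ * t) (1, 0))
      + (∫ t : ℝ, σ * (c * t) * fderiv ℝ φ (t, σ * t) (0, 1))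
      = -(c * ∫ t : ℝ, φ (t, σ * t)) := by
    rw [← integral_add (hslice24 (1,0)) hslice24']
    have heq : ∀ t : ℝ, c * t * fderiv ℝ φ (t, σ * t) (1, 0)
        + σ * (c * t) * fderiv ℝ φ (t, σ * t) (0, 1)
        = c * t * fderiv ℝ φ (t, σ * t) (1, σ) := fun t => by
      rw [fderiv_split φ (t, σ * t) σ]; ring
    simp only [heq]
    have hder : ∀ t : ℝ, HasDerivAt (fun t => c * t * φ (t, σ * t))
        (c * φ (t, σ * t) + c * t * fderiv ℝ φ (t, σ * t) (1, σ)) t := by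
      intro t
      have hft : HasDerivAt (fun t : ℝ => c * t) c t := by
        simpa using (hasDerivAt_id t).const_mul c
      exact hft.mul (hasDerivAt_psi hφ σ t)
    have hcd1 : ContDiff ℝ 1 (fun t : ℝ => c * t * φ (t, σ * t)) :=
      (contDiff_const.mul contDiff_id).mul (psi_contdiff hφ σ)
    have hcs1 : HasCompactSupport (fun t : ℝ => c * t * φ (t, σ * t)) := by
      apply HasCompactSupport.intro (psi_hcs hφc σ)
      intro t ht
      rw [image_eq_zero_of_notMem_tsupport ht, mul_zero]
    have hz := integral_deriv_zero hcd1 hcs1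
    have hdeq : deriv (fun t : ℝ => c * t * φ (t, σ * t))
        = fun t => c * φ (t, σ * t) + c * t * fderiv ℝ φ (t, σ * t) (1, σ) :=
      funext fun t => (hder t).deriv
    rw [hdeq] at hz
    rw [integral_add (hψint.const_mul c) (hslice24 (1,σ)), integral_const_mul] at hz
    linarith
  rw [hA1, hA2, hA3, hA4]
  linarith [hsplit, hI, hJ, h24]
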